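/- arXiv:1004.3591 — 5 statements merged into one kernel-verified Lean document; each statement's English description precedes it below -/
import Mathlib

section
/- If a, b, c are relatively prime polynomials over ℂ, not all constant, satisfying a + b = c, then max(deg a, deg b, deg c) < the number of distinct complex roots of the product a*b*c. -/
open Polynomial UniqueFactorizationMonoid UniqueFactorizationDomain

lemma radical_natDegree_eq_card_roots {p : ℂ[X]} (hp : p ≠ 0) :
    (radical p).natDegree = p.roots.toFinset.card := by
  classical
  have hpf : primeFactors p = p.roots.toFinset.image (fun r => X - C r) := by
    ext q
    simp only [primeFactors, Multiset.mem_toFinset, Finset.mem_image]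
    constructor
    · intro hq
      have hq0 : q ≠ 0 := fun h => zero_notMem_normalizedFactors p (h ▸ hq)
      have hirr : Irreducible q := irreducible_of_normalized_factor q hq
      have hmonic : q.Monic := by
        have := normalize_normalized_factor q hq
        rw [← this]
        exact monic_normalize hq0
      have hdeg : q.degree = 1 := IsAlgClosed.degree_eq_one_of_irreducible ℂ hirr
      have hq' : q = X - C (-(q.coeff 0)) := by
        have := eq_X_add_C_of_degree_eq_one hdeg
        rw [hmonic.leadingCoeff] at this
        rw [map_neg, sub_neg_eq_add]
        conv_lhs => rw [this]
        rw [map_one, one_mul]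
      refine ⟨-(q.coeff 0), ?_, hq'.symm⟩
      rw [mem_roots hp]
      have hdvd : q ∣ p := dvd_of_mem_normalizedFactors hq
      have : IsRoot q (-(q.coeff 0)) := by rw [hq']; simp
      exact this.dvd hdvd
    · rintro ⟨r, hr, rfl⟩
      have hroot : IsRoot p r := isRoot_of_mem_roots hr
      have hdvd : X - C r ∣ p := dvd_iff_isRoot.mpr hroot
      obtain ⟨q, hq, hassoc⟩ :=
        exists_mem_normalizedFactors_of_dvd hp (irreducible_X_sub_C r) hdvd
      have hq0 : q ≠ 0 := fun h => zero_notMem_normalizedFactors p (h ▸ hq)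
      have hqm : q.Monic := by
        have := normalize_normalized_factor q hq
        rw [← this]; exact monic_normalize hq0
      exact (eq_of_monic_of_associated hqm (monic_X_sub_C r) hassoc.symm) ▸ hq
  rw [radical, hpf]
  rw [Finset.prod_image (fun x _ y _ h => by
    have := congrArg (fun q : ℂ[X] => -(q.coeff 0)) h
    simpa using this)]
  rw [Polynomial.natDegree_prod _ _ (fun r _ => X_sub_C_ne_zero r)]
  simp [natDegree_X_sub_C]

/-- Mason's abc theorem for polynomials over ℂ. -/
theorem mason_abc (a b c : ℂ[X])
    (hab : IsCoprime a b) (hbc : IsCoprime b c) (hac : IsCoprime a c)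
    (habc : a + b = c)
    (hconst : ¬ (a.natDegree = 0 ∧ b.natDegree = 0 ∧ c.natDegree = 0)) :
    max a.natDegree (max b.natDegree c.natDegree) < (a * b * c).roots.toFinset.card := by
  classical
  have ha : a ≠ 0 := by
    rintro rfl
    rw [isCoprime_zero_left] at hab
    obtain ⟨u, rfl⟩ := hab
    simp at habc
    exact hconst ⟨rfl, natDegree_eq_zero_of_isUnit u.isUnit, by
      rw [← habc]; exact natDegree_eq_zero_of_isUnit u.isUnit⟩
  have hb : b ≠ 0 := by
    rintro rfl
    rw [isCoprime_zero_left] at hbc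
    simp only [add_zero] at habc
    exact hconst ⟨by rw [habc]; exact natDegree_eq_zero_of_isUnit hbc, rfl,
      natDegree_eq_zero_of_isUnit hbc⟩
  have hc : c ≠ 0 := by
    rintro rfl
    rw [isCoprime_zero_right] at hac
    have hb' : b = -a := by linear_combination habc
    exact hconst ⟨natDegree_eq_zero_of_isUnit hac, by
      rw [hb', natDegree_neg]; exact natDegree_eq_zero_of_isUnit hac, rfl⟩
  have hsum : a + b + (-c) = 0 := by rw [habc]; ring
  have habc' := Polynomial.abc ha hb (neg_ne_zero.mpr hc) hab
    hsum
  rcases habc' with ⟨h1, h2, h3⟩ | ⟨d1, d2, d3⟩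
  · have hrad : radical (a * b * (-c)) = radical (a * b * c) := by
      rw [show a * b * (-c) = -(a * b * c) by ring, radical_neg]
    rw [hrad] at h1 h2 h3
    have hdeg : (radical (a * b * c)).natDegree = (a * b * c).roots.toFinset.card :=
      radical_natDegree_eq_card_roots (mul_ne_zero (mul_ne_zero ha hb) hc)
    rw [natDegree_neg] at h3
    omega
  · exfalso
    apply hconst
    refine ⟨natDegree_eq_zero_of_derivative_eq_zero d1,
      natDegree_eq_zero_of_derivative_eq_zero d2, ?_⟩
    rw [derivative_neg, neg_eq_zero] at d3
    exact natDegree_eq_zero_of_derivative_eq_zero d3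
end

section
/- There are no polynomials A, B, C over ℂ, not all constant and pairwise coprime, satisfying A^n + B^n = C^n for any integer n ≥ 3. -/
open Polynomial UniqueFactorizationMonoid

private lemma unit_deg_zero {P : ℂ[X]} (h : IsUnit P) : P.natDegree = 0 := by
  rw [Polynomial.isUnit_iff] at h; obtain ⟨r, _, rfl⟩ := h; simp

/-- Fermat's Last Theorem for polynomials over ℂ. -/
theorem flt_polynomials (n : ℕ) (hn : 3 ≤ n) :
    ¬ ∃ A B C : ℂ[X],
        (0 < A.natDegree ∨ 0 < B.natDegree ∨ 0 < C.natDegree) ∧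
        IsCoprime A B ∧ IsCoprime B C ∧ IsCoprime A C ∧
        A ^ n + B ^ n = C ^ n := by
  classical
  rintro ⟨A, B, C, hdeg, hAB, hBC, hAC, heq⟩
  have hn0 : 0 < n := by omega
  have hself : ∀ P : ℂ[X], P ∣ P ^ n := fun P => dvd_pow_self P hn0.ne'
  have hA : A ≠ 0 := by
    rintro rfl
    rw [zero_pow hn0.ne', zero_add] at heq
    have hBu : IsUnit B := hBC.pow_right.isUnit_of_dvd (heq ▸ hself B)
    have hCu : IsUnit C := hBC.symm.pow_right.isUnit_of_dvd (heq ▸ hself C)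
    have := unit_deg_zero hBu
    have := unit_deg_zero hCu
    simp only [natDegree_zero] at hdeg
    omega
  have hB : B ≠ 0 := by
    rintro rfl
    rw [zero_pow hn0.ne', add_zero] at heq
    have hAu : IsUnit A := hAC.pow_right.isUnit_of_dvd (heq ▸ hself A)
    have hCu : IsUnit C := hAC.symm.pow_right.isUnit_of_dvd (heq ▸ hself C)
    have := unit_deg_zero hAu
    have := unit_deg_zero hCu
    simp only [natDegree_zero] at hdeg
    omega
  have hC : C ≠ 0 := by
    rintro rfl
    rw [zero_pow hn0.ne'] at heq
    have h' : A ^ n = -(B ^ n) := by linear_combination heq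
    have hAu : IsUnit A := hAB.pow_right.isUnit_of_dvd
      (dvd_neg.mp (h' ▸ hself A))
    have h'' : B ^ n = -(A ^ n) := by linear_combination heq
    have hBu : IsUnit B := hAB.symm.pow_right.isUnit_of_dvd
      (dvd_neg.mp (h'' ▸ hself B))
    have := unit_deg_zero hAu
    have := unit_deg_zero hBu
    simp only [natDegree_zero] at hdeg
    omega
  have hsum : A ^ n + B ^ n + -(C ^ n) = 0 := by rw [heq]; ring
  have habc := Polynomial.abc (pow_ne_zero n hA) (pow_ne_zero n hB)
    (neg_ne_zero.mpr (pow_ne_zero n hC))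
    (hAB.pow) hsum
  rcases habc with ⟨h1, h2, h3⟩ | ⟨d1, d2, d3⟩
  · have hrad : radical (A ^ n * B ^ n * -(C ^ n)) = radical (A * B * C) := by
      have he : A ^ n * B ^ n * -(C ^ n) = (↑(-1 : ℂ[X]ˣ) : ℂ[X]) * (A * B * C) ^ n := by
        push_cast; ring
      rw [he, radical_mul_of_isUnit_left (Units.isUnit _), radical_pow _ hn0.ne']
    rw [hrad] at h1 h2 h3
    have hABC : A * B * C ≠ 0 := mul_ne_zero (mul_ne_zero hA hB) hC
    have hradle : (radical (A * B * C)).natDegree ≤ (A * B * C).natDegree :=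
      Polynomial.natDegree_le_of_dvd radical_dvd_self hABC
    have hd : (A * B * C).natDegree = A.natDegree + B.natDegree + C.natDegree := by
      rw [Polynomial.natDegree_mul (mul_ne_zero hA hB) hC, Polynomial.natDegree_mul hA hB]
    rw [natDegree_pow] at h1 h2
    rw [natDegree_neg, natDegree_pow] at h3
    have := add_le_add (add_le_add h1 h2) h3
    nlinarith [A.natDegree.zero_le, B.natDegree.zero_le, C.natDegree.zero_le]
  · have key : ∀ P : ℂ[X], derivative (P ^ n) = 0 → P.natDegree = 0 := by
      intro P hP
      have h0 := Polynomial.natDegree_eq_zero_of_derivative_eq_zero hP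
      rw [natDegree_pow] at h0
      rcases Nat.mul_eq_zero.mp h0 with h | h
      · omega
      · exact h
    have k1 := key A d1
    have k2 := key B d2
    have k3 := key C (by simpa using d3)
    omega
end

section
/- Let p₀, p₁, …, pₙ be linearly independent polynomials over ℂ and let p_{n+1} = p₀ + ⋯ + pₙ. If the zero-sets of p₀, …, p_{n+1} are pairwise disjoint, then max over 0 ≤ j ≤ n+1 of deg pⱼ is at most n · Ñ(p₀p₁⋯p_{n+1}) − n(n+1)/2, where Ñ(q) denotes the number of distinct complex roots of q. -/
open Polynomial Finset

noncomputable def Wr (m : ℕ) (f : Fin m → ℂ[X]) : ℂ[X] :=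
  Matrix.det (Matrix.of fun j i : Fin m => derivative^[(i : ℕ)] (f j))

theorem pairW {a b : ℂ[X]} (hb : b ≠ 0) (h : a * derivative b = derivative a * b) :
    ∃ c : ℂ, a = C c * b := by
  rcases eq_or_ne a 0 with rfl | ha
  · exact ⟨0, by simp⟩
  set d := GCDMonoid.gcd a b with hd
  have hd0 : d ≠ 0 := gcd_ne_zero_of_left ha
  set a₁ := a / d with ha₁d
  set b₁ := b / d with hb₁d
  have ha₁ : a = d * a₁ := (EuclideanDomain.mul_div_cancel' hd0 (gcd_dvd_left a b)).symm
  have hb₁ : b = d * b₁ := (EuclideanDomain.mul_div_cancel' hd0 (gcd_dvd_right a b)).symm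
  have hcop : IsCoprime a₁ b₁ := isCoprime_div_gcd_div_gcd hb
  have ha₁0 : a₁ ≠ 0 := fun h0 => ha (by rw [ha₁, h0, mul_zero])
  have hb₁0 : b₁ ≠ 0 := fun h0 => hb (by rw [hb₁, h0, mul_zero])
  -- reduce the wronskian relation
  have key : a₁ * derivative b₁ = derivative a₁ * b₁ := by
    have h2 : d * (d * (a₁ * derivative b₁)) = d * (d * (derivative a₁ * b₁)) := by
      have := h
      rw [ha₁, hb₁] at this
      rw [derivative_mul, derivative_mul] at this
      ring_nf at this ⊢
      linear_combination this
    exact mul_left_cancel₀ hd0 (mul_left_cancel₀ hd0 h2)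
  have hbdvd : b₁ ∣ derivative b₁ := by
    have : b₁ ∣ a₁ * derivative b₁ := key ▸ Dvd.intro_left _ rfl
    exact (hcop.symm.dvd_of_dvd_mul_left this)
  have hb₁' : derivative b₁ = 0 := by
    by_contra h0
    have := Polynomial.degree_le_of_dvd hbdvd h0
    have h2 := Polynomial.degree_derivative_lt hb₁0
    exact absurd (lt_of_le_of_lt this h2) (lt_irrefl _)
  have ha₁' : derivative a₁ = 0 := by
    have : derivative a₁ * b₁ = 0 := by rw [← key, hb₁', mul_zero]
    rcases mul_eq_zero.mp this with h0 | h0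
    · exact h0
    · exact absurd h0 hb₁0
  obtain ⟨ca, hca⟩ := Polynomial.natDegree_eq_zero.mp (natDegree_eq_zero_of_derivative_eq_zero ha₁')
  obtain ⟨cb, hcb⟩ := Polynomial.natDegree_eq_zero.mp (natDegree_eq_zero_of_derivative_eq_zero hb₁')
  have hcb0 : cb ≠ 0 := fun h0 => hb₁0 (by rw [← hcb, h0, map_zero])
  refine ⟨ca / cb, ?_⟩
  rw [ha₁, hb₁, ← hca, ← hcb]
  rw [mul_comm (C (ca/cb)) _, mul_assoc, ← map_mul]
  congr 1
  field_simp

theorem Wr_dep(m : ℕ) : ∀ f : Fin m → ℂ[X], Wr m f = 0 →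
    ∃ c : Fin m → ℂ, (∑ j, c j • f j) = 0 ∧ c ≠ 0 := by
  induction m with
  | zero =>
    intro f h
    exfalso
    simp [Wr, Matrix.det_fin_zero] at h
  | succ m ih =>
    intro f h
    set f' : Fin m → ℂ[X] := fun j => f j.castSucc with hf'
    by_cases hW' : Wr m f' = 0
    · obtain ⟨c', hs', hn'⟩ := ih f' hW'
      refine ⟨Fin.snoc c' 0, ?_, ?_⟩
      · rw [Fin.sum_univ_castSucc]
        simp only [Fin.snoc_castSucc, Fin.snoc_last, zero_smul, add_zero]
        exact hs'
      · intro h0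
        apply hn'
        funext j
        have := congrFun h0 j.castSucc
        simpa [Fin.snoc_castSucc] using this
    · -- main case
      set M : Matrix (Fin (m+1)) (Fin (m+1)) ℂ[X] :=
        Matrix.of fun j i => derivative^[(i : ℕ)] (f j) with hM
      set B : Matrix (Fin m) (Fin m) ℂ[X] :=
        Matrix.of fun j i => derivative^[(i : ℕ)] (f' j) with hB
      have hdetB : B.det ≠ 0 := hW'
      obtain ⟨g, hg0, hgker⟩ := (Matrix.exists_vecMul_eq_zero_iff).mpr h
      have hrow : ∀ i : Fin (m+1), ∑ j, g j * derivative^[(i : ℕ)] (f j) = 0 := by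
        intro i
        have := congrFun hgker i
        simpa [Matrix.vecMul, dotProduct, hM] using this
      have hgL : g (Fin.last m) ≠ 0 := by
        intro hgL0
        have hg'0 : (fun j : Fin m => g j.castSucc) ≠ 0 := by
          intro h0
          apply hg0
          funext j
          refine Fin.lastCases ?_ ?_ j
          · exact hgL0
          · intro j'; exact congrFun h0 j'
        have hker' : Matrix.vecMul (fun j : Fin m => g j.castSucc) B = 0 := by
          funext i
          have h1 := hrow i.castSucc
          rw [Fin.sum_univ_castSucc] at h1
          simp only [hgL0, zero_mul, add_zero] at h1
          simpa [Matrix.vecMul, dotProduct, hB, hf'] using h1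
        exact hdetB (Matrix.exists_vecMul_eq_zero_iff.mp ⟨_, hg'0, hker'⟩)
      have hrow' : ∀ i : ℕ, i < m → ∑ j, derivative (g j) * derivative^[i] (f j) = 0 := by
        intro i hi
        have h1 := congrArg derivative (hrow ⟨i, Nat.lt_succ_of_lt hi⟩)
        rw [derivative_sum, map_zero] at h1
        simp only [derivative_mul] at h1
        rw [Finset.sum_add_distrib] at h1
        have h2 : ∑ j, g j * derivative (derivative^[i] (f j)) = 0 := by
          have h3 := hrow ⟨i+1, Nat.succ_lt_succ hi⟩
          simpa [Function.iterate_succ_apply'] using h3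
        rw [h2, add_zero] at h1
        exact h1
      set gL := g (Fin.last m) with hgLdef
      set colL : Fin m → ℂ[X] := fun i => derivative^[(i:ℕ)] (f (Fin.last m)) with hcolL
      set w : Fin m → ℂ[X] := Matrix.vecMul colL B.adjugate with hw
      have hdetu : ∀ (u' : Fin m → ℂ[X]) (a : ℂ[X]),
          Matrix.vecMul u' B = (fun i => -(a * colL i)) →
          ∀ j, B.det * u' j = -(a * w j) := by
        intro u' a hu' j
        have h1 := Matrix.vecMul_vecMul u' B B.adjugate
        rw [hu', Matrix.mul_adjugate] at h1
        have hL : Matrix.vecMul (fun i => -(a * colL i)) B.adjugate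
            = fun k => -(a * w k) := by
          funext k
          simp only [Matrix.vecMul, dotProduct, hw]
          rw [Finset.mul_sum, ← Finset.sum_neg_distrib]
          exact Finset.sum_congr rfl fun i _ => by ring
        have hR : Matrix.vecMul u' (B.det • (1 : Matrix (Fin m) (Fin m) ℂ[X]))
            = fun k => B.det * u' k := by
          funext k
          simp [Matrix.vecMul, dotProduct, Matrix.one_apply, mul_ite, mul_comm]
        rw [hL, hR] at h1
        exact (congrFun h1 j).symm
      have hu2 : Matrix.vecMul (fun j : Fin m => g j.castSucc) B
          = fun i => -(gL * colL i) := by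
        funext i
        have h1 := hrow i.castSucc
        rw [Fin.sum_univ_castSucc] at h1
        simp only [Matrix.vecMul, dotProduct, hB, Matrix.of_apply, hf', hcolL]
        exact eq_neg_of_add_eq_zero_left h1
      have hv2 : Matrix.vecMul (fun j : Fin m => derivative (g j.castSucc)) B
          = fun i => -(derivative gL * colL i) := by
        funext i
        have h1 := hrow' i i.isLt
        rw [Fin.sum_univ_castSucc] at h1
        simp only [Matrix.vecMul, dotProduct, hB, Matrix.of_apply, hf', hcolL]
        exact eq_neg_of_add_eq_zero_left h1
      have hkey : ∀ j : Fin m, g j.castSucc * derivative gL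
          = derivative (g j.castSucc) * gL := by
        intro j
        have h1 := hdetu _ gL hu2 j
        have h2 := hdetu _ (derivative gL) hv2 j
        have h3 : B.det * (g j.castSucc * derivative gL - derivative (g j.castSucc) * gL) = 0 := by
          linear_combination derivative gL * h1 - gL * h2
        rcases mul_eq_zero.mp h3 with h4 | h4
        · exact absurd h4 hdetB
        · exact sub_eq_zero.mp h4
      have hprop : ∀ j : Fin m, ∃ c : ℂ, g j.castSucc = C c * gL :=
        fun j => pairW hgL (hkey j)
      choose c' hc' using hprop
      refine ⟨Fin.snoc c' 1, ?_, ?_⟩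
      · have h0 := hrow 0
        simp only [Fin.val_zero, Function.iterate_zero, id_eq] at h0
        have hg : ∀ j : Fin (m+1), g j = C ((Fin.snoc c' 1 : Fin (m+1) → ℂ) j) * gL := by
          intro j
          refine Fin.lastCases ?_ ?_ j
          · simp [hgLdef]
          · intro j'; simpa using hc' j'
        have h2 : gL * ∑ j, (Fin.snoc c' 1 : Fin (m+1) → ℂ) j • f j = 0 := by
          rw [Finset.mul_sum]
          rw [← h0]
          apply Finset.sum_congr rfl
          intro j _
          rw [hg j, Polynomial.smul_eq_C_mul]
          ring
        rcases mul_eq_zero.mp h2 with h4 | h4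
        · exact absurd h4 hgL
        · exact h4
      · intro h0
        have := congrFun h0 (Fin.last m)
        simp [Fin.snoc_last] at this

-- degree of iterated derivativeplus k bounded by degree
theorem degA (g : ℂ[X]) (k : ℕ) : degree (derivative^[k] g) + (k : WithBot ℕ) ≤ degree g := by
  induction k with
  | zero => simp
  | succ k ihk =>
    rcases eq_or_ne (derivative^[k] g) 0 with h0 | h0
    · rw [Function.iterate_succ_apply', h0]
      simp
    · rw [Function.iterate_succ_apply']
      have h1 : degree (derivative (derivative^[k] g)) + 1 ≤ degree (derivative^[k] g) := by
        rcases eq_or_ne (derivative (derivative^[k] g)) 0 with h2 | h2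
        · rw [h2]; simp
        · have := Polynomial.degree_derivative_lt h0
          rw [Polynomial.degree_eq_natDegree h2, Polynomial.degree_eq_natDegree h0] at this ⊢
          rw [← Nat.cast_one, ← Nat.cast_add, Nat.cast_le]
          exact_mod_cast Nat.succ_le_of_lt (by exact_mod_cast this)
      calc degree (derivative (derivative^[k] g)) + ((k:ℕ)+1 : ℕ)
          = (degree (derivative (derivative^[k] g)) + 1) + (k : WithBot ℕ) := by
            push_cast; ring
        _ ≤ degree (derivative^[k] g) + (k : WithBot ℕ) := by
            exact add_le_add_left h1 _
        _ ≤ degree g := ihk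

theorem Wr_ne_zero_entry (m : ℕ) (f : Fin m → ℂ[X]) (hW : Wr m f ≠ 0) (j : Fin m) :
    f j ≠ 0 := by
  intro h0
  apply hW
  apply Matrix.det_eq_zero_of_row_eq_zero j
  intro i
  simp [h0]

theorem Wr_degree_bound (m : ℕ) (f : Fin m → ℂ[X]) (hW : Wr m f ≠ 0) :
    (Wr m f).natDegree + m * (m-1) / 2 ≤ ∑ j, (f j).natDegree := by
  have hf0 : ∀ j, f j ≠ 0 := Wr_ne_zero_entry m f hW
  set Mm : Matrix (Fin m) (Fin m) ℂ[X] :=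
    Matrix.of fun j i => derivative^[(i : ℕ)] (f j) with hMm
  have hdet : Wr m f = ∑ σ : Equiv.Perm (Fin m),
      ((Equiv.Perm.sign σ : ℤ) : ℂ[X]) * ∏ i, Mm (σ i) i := Matrix.det_apply' Mm
  have hterm : ∀ σ : Equiv.Perm (Fin m),
      degree (((Equiv.Perm.sign σ : ℤ) : ℂ[X]) * ∏ i, Mm (σ i) i) + (↑(m*(m-1)/2) : WithBot ℕ)
        ≤ (↑(∑ j, (f j).natDegree) : WithBot ℕ) := by
    intro σ
    have h1 : degree (((Equiv.Perm.sign σ : ℤ) : ℂ[X]) * ∏ i, Mm (σ i) i)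
        ≤ degree (∏ i, Mm (σ i) i) := by
      refine le_trans (Polynomial.degree_mul_le _ _) ?_
      have := Polynomial.degree_intCast_le (R := ℂ) (Equiv.Perm.sign σ : ℤ)
      calc degree ((Equiv.Perm.sign σ : ℤ) : ℂ[X]) + degree (∏ i, Mm (σ i) i)
          ≤ 0 + degree (∏ i, Mm (σ i) i) := add_le_add_left this _
        _ = degree (∏ i, Mm (σ i) i) := zero_add _
    have h2 : degree (∏ i, Mm (σ i) i) ≤ ∑ i, degree (Mm (σ i) i) :=
      Polynomial.degree_prod_le _ _
    have hc : (↑(m*(m-1)/2) : WithBot ℕ) = ∑ i : Fin m, ((i : ℕ) : WithBot ℕ) := by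
      rw [← Nat.cast_sum]
      congr 1
      rw [Fin.sum_univ_eq_sum_range (fun i => i) m]
      exact (Finset.sum_range_id m).symm
    calc degree (((Equiv.Perm.sign σ : ℤ) : ℂ[X]) * ∏ i, Mm (σ i) i) + (↑(m*(m-1)/2) : WithBot ℕ)
        ≤ (∑ i, degree (Mm (σ i) i)) + ∑ i : Fin m, ((i : ℕ) : WithBot ℕ) := by
          rw [← hc]; exact add_le_add_left (le_trans h1 h2) _
      _ = ∑ i : Fin m, (degree (Mm (σ i) i) + ((i : ℕ) : WithBot ℕ)) := by
          rw [Finset.sum_add_distrib]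
      _ ≤ ∑ i : Fin m, degree (f (σ i)) := by
          apply Finset.sum_le_sum
          intro i _
          exact degA (f (σ i)) (i : ℕ)
      _ = ∑ i : Fin m, (↑((f (σ i)).natDegree) : WithBot ℕ) := by
          apply Finset.sum_congr rfl
          intro i _
          exact Polynomial.degree_eq_natDegree (hf0 _)
      _ = ∑ j : Fin m, (↑((f j).natDegree) : WithBot ℕ) := Equiv.sum_comp σ (fun j => (((f j).natDegree : ℕ) : WithBot ℕ))
      _ = (↑(∑ j, (f j).natDegree) : WithBot ℕ) := by rw [Nat.cast_sum]
  have hWd : (↑((Wr m f).natDegree) : WithBot ℕ) ≤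
      Finset.univ.sup (fun σ : Equiv.Perm (Fin m) =>
        degree (((Equiv.Perm.sign σ : ℤ) : ℂ[X]) * ∏ i, Mm (σ i) i)) := by
    rw [← Polynomial.degree_eq_natDegree hW, hdet]
    exact Polynomial.degree_sum_le _ _
  obtain ⟨σ, _, hσ⟩ := (Finset.le_sup_iff (by exact bot_lt_iff_ne_bot.mpr (by simp))).mp hWd
  have := le_trans (add_le_add_left hσ ((↑(m*(m-1)/2) : WithBot ℕ))) (hterm σ)
  have h2 : ((((Wr m f).natDegree + m*(m-1)/2 : ℕ)) : WithBot ℕ)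
      ≤ (↑(∑ j, (f j).natDegree) : WithBot ℕ) := by
    push_cast at this ⊢
    exact this
  exact_mod_cast h2

theorem Wr_root_dvd(m : ℕ) (f : Fin m → ℂ[X]) (q : ℂ[X]) (j : Fin m) (a : ℕ)
    (ha : q ^ a ∣ f j) : q ^ (a - (m-1)) ∣ Wr m f := by
  rw [Wr, Matrix.det_apply']
  apply Finset.dvd_sum
  intro σ _
  apply Dvd.dvd.mul_left
  have hj : q ^ (a - (m-1)) ∣ derivative^[((σ.symm j : Fin m) : ℕ)] (f j) := by
    refine dvd_trans (pow_dvd_pow q ?_) (pow_sub_dvd_iterate_derivative_of_pow_dvd _ ha)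
    have : ((σ.symm j : Fin m) : ℕ) ≤ m - 1 := Nat.le_sub_one_of_lt (σ.symm j).isLt
    omega
  rw [← Finset.prod_erase_mul univ _ (mem_univ (σ.symm j))]
  apply Dvd.dvd.mul_left
  simpa [Equiv.apply_symm_apply] using hj

theorem Wr_update (m : ℕ) (f : Fin (m+1) → ℂ[X]) (k : Fin (m+1)) :
    Wr (m+1) (Function.update f k (∑ j, f j)) = Wr (m+1) f := by
  rw [Wr, Wr]
  have hmat : (Matrix.of fun j i : Fin (m+1) =>
      derivative^[(i : ℕ)] ((Function.update f k (∑ j, f j)) j))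
      = Matrix.updateRow (Matrix.of fun j i : Fin (m+1) => derivative^[(i : ℕ)] (f j)) k
        (∑ j, (fun i : Fin (m+1) => derivative^[(i : ℕ)] (f j))) := by
    ext j i
    rcases eq_or_ne j k with rfl | hjk
    · simp [Matrix.updateRow_self, Polynomial.iterate_derivative_sum]
    · simp [Function.update_of_ne hjk, Matrix.updateRow_ne hjk]
  rw [hmat]
  have : (∑ j, (fun i : Fin (m+1) => derivative^[(i : ℕ)] (f j)))
      = ∑ j : Fin (m+1), (1:ℂ[X]) • (Matrix.of fun j i : Fin (m+1) =>
          derivative^[(i : ℕ)] (f j)) j := by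
    funext i
    simp [Finset.sum_apply]
    exact (Finset.sum_apply (M := fun _ : Fin (m+1) => ℂ[X]) i Finset.univ
      (fun c => Matrix.of (fun j i : Fin (m+1) => derivative^[(i : ℕ)] (f j)) c)).symm
  rw [this, Matrix.det_updateRow_sum]
  simp

/-- The abc...xyz theorem (Theorem B) for polynomials over ℂ. -/
theorem abcxyz_polynomials (n : ℕ) (p : Fin (n + 2) → ℂ[X])
    (hli : LinearIndependent ℂ (fun j : Fin (n + 1) => p j.castSucc))
    (hsum : p (Fin.last (n + 1)) = ∑ j : Fin (n + 1), p j.castSucc)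
    (hdisj : ∀ j k : Fin (n + 2), j ≠ k → ∀ z : ℂ, ¬((p j).eval z = 0 ∧ (p k).eval z = 0)) :
    ∀ j : Fin (n + 2),
      ((p j).natDegree : ℤ) ≤
        n * ((∏ j : Fin (n + 2), p j).roots.toFinset.card : ℤ) - n * (n + 1) / 2 := by
  set f : Fin (n+1) → ℂ[X] := fun j => p j.castSucc with hf
  -- the Wronskian is nonzero
  have hW0 : Wr (n+1) f ≠ 0 := by
    intro h0
    obtain ⟨c, hcs, hcn⟩ := Wr_dep (n+1) f h0
    exact hcn (funext fun j => Fintype.linearIndependent_iff.mp hli c hcs j)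
  -- each replaced family has the same Wronskian
  have hWup : ∀ k : Fin (n+1), Wr (n+1) (Function.update f k (p (Fin.last (n+1)))) = Wr (n+1) f := by
    intro k
    rw [hsum]
    exact Wr_update n f k
  -- all p j are nonzero
  have hp0 : ∀ j : Fin (n+2), p j ≠ 0 := by
    intro j
    refine Fin.lastCases ?_ ?_ j
    · have := Wr_ne_zero_entry (n+1) _ (by rw [hWup 0]; exact hW0) 0
      rwa [Function.update_self] at this
    · intro j'
      exact hli.ne_zero j'
  set P : ℂ[X] := ∏ j : Fin (n+2), p j with hP
  have hPne : P ≠ 0 := prod_ne_zero_iff.mpr fun j _ => hp0 j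
  set N := P.roots.toFinset.card with hN
  -- root divisibility
  have hdvdW : ∀ z ∈ P.roots.toFinset, (X - C z) ^ (rootMultiplicity z P - n) ∣ Wr (n+1) f := by
    intro z hz
    rw [Multiset.mem_toFinset, Polynomial.mem_roots hPne, Polynomial.IsRoot] at hz
    have hzero : ∃ j, (p j).eval z = 0 := by
      rw [hP, Polynomial.eval_prod, Finset.prod_eq_zero_iff] at hz
      obtain ⟨j, _, hj⟩ := hz
      exact ⟨j, hj⟩
    obtain ⟨j₀, hj₀⟩ := hzero
    have hothers : ∀ j : Fin (n+2), j ≠ j₀ → (p j).eval z ≠ 0 := by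
      intro j hj hj0
      exact hdisj j j₀ hj z ⟨hj0, hj₀⟩
    have hmult : rootMultiplicity z P = rootMultiplicity z (p j₀) := by
      have hroots : P.roots = Finset.univ.val.bind fun j => (p j).roots :=
        Polynomial.roots_prod p Finset.univ hPne
      rw [← Polynomial.count_roots, hroots, Multiset.count_bind]
      have hmsum : (Multiset.map (fun b => Multiset.count z (p b).roots) Finset.univ.val).sum
          = ∑ b : Fin (n+2), Multiset.count z (p b).roots := rfl
      rw [hmsum]
      rw [Finset.sum_eq_single j₀ (fun j _ hj => ?_) (fun h => absurd (Finset.mem_univ _) h)]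
      · rw [Polynomial.count_roots]
      · rw [Polynomial.count_roots, Polynomial.rootMultiplicity_eq_zero (hothers j hj)]
    have hdvdp : (X - C z) ^ (rootMultiplicity z P) ∣ p j₀ := by
      rw [hmult]; exact Polynomial.pow_rootMultiplicity_dvd _ _
    have hn1 : rootMultiplicity z P - n = rootMultiplicity z P - ((n+1)-1) := by norm_num
    rw [hn1]
    refine Fin.lastCases ?_ ?_ j₀ hdvdp
    · intro hdvdp'
      rw [← hWup 0]
      refine Wr_root_dvd (n+1) _ _ 0 _ ?_
      rwa [Function.update_self]
    · intro j' hdvdp'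
      exact Wr_root_dvd (n+1) f _ j' _ hdvdp'
  -- the product of the root powers divides the Wronskian
  set Rp : ℂ[X] := ∏ z ∈ P.roots.toFinset, (X - C z) ^ (rootMultiplicity z P - n) with hRp
  have hRdvd : Rp ∣ Wr (n+1) f := by
    refine Finset.prod_dvd_of_coprime (fun a _ b _ hab => ?_) hdvdW
    exact ((Polynomial.pairwise_coprime_X_sub_C (Function.injective_id) hab).pow)
  have hRdeg : Rp.natDegree = ∑ z ∈ P.roots.toFinset, (rootMultiplicity z P - n) := by
    rw [hRp, Polynomial.natDegree_prod]
    · apply Finset.sum_congr rfl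
      intro z _
      rw [Polynomial.natDegree_pow, Polynomial.natDegree_X_sub_C, mul_one]
    · intro z _
      exact pow_ne_zero _ (Polynomial.X_sub_C_ne_zero z)
  have hRW : Rp.natDegree ≤ (Wr (n+1) f).natDegree :=
    Polynomial.natDegree_le_of_dvd hRdvd hW0
  -- degree of P as sum of multiplicities
  have hPdeg : P.natDegree = ∑ z ∈ P.roots.toFinset, rootMultiplicity z P := by
    have h1 : P.natDegree = Multiset.card P.roots :=
      (Polynomial.splits_iff_card_roots.mp (IsAlgClosed.splits P)).symm
    rw [h1, ← Multiset.toFinset_sum_count_eq]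
    apply Finset.sum_congr rfl
    intro z _
    rw [Polynomial.count_roots]
  have hPle : P.natDegree ≤ (Wr (n+1) f).natDegree + n * N := by
    calc P.natDegree = ∑ z ∈ P.roots.toFinset, rootMultiplicity z P := hPdeg
      _ ≤ ∑ z ∈ P.roots.toFinset, ((rootMultiplicity z P - n) + n) :=
          Finset.sum_le_sum fun z _ => le_tsub_add
      _ = Rp.natDegree + n * N := by
          rw [Finset.sum_add_distrib, hRdeg, Finset.sum_const, smul_eq_mul, hN, mul_comm]
      _ ≤ (Wr (n+1) f).natDegree + n * N := by omega
  -- degree identity for P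
  have hPsum : P.natDegree = ∑ j : Fin (n+1), (f j).natDegree + (p (Fin.last (n+1))).natDegree := by
    rw [hP, Polynomial.natDegree_prod _ _ (fun j _ => hp0 j), Fin.sum_univ_castSucc]
  -- main bound per index
  intro j
  have key : ∀ k : Fin (n+2), (p k).natDegree + (n+1) * n / 2 ≤ n * N := by
    intro k
    refine Fin.lastCases ?_ ?_ k
    · -- k = last
      have h1 := Wr_degree_bound (n+1) f hW0
      simp only [Nat.add_sub_cancel] at h1
      omega
    · -- k = castSucc k'
      intro k'
      have hWk : Wr (n+1) (Function.update f k' (p (Fin.last (n+1)))) ≠ 0 := by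
        rw [hWup k']; exact hW0
      have h1 := Wr_degree_bound (n+1) _ hWk
      simp only [Nat.add_sub_cancel] at h1
      rw [hWup k'] at h1
      have h2a : ∑ jj : Fin (n+1), ((Function.update f k' (p (Fin.last (n+1)))) jj).natDegree
          = ∑ jj : Fin (n+1), (Function.update (fun x : Fin (n+1) => (f x).natDegree) k'
              ((p (Fin.last (n+1))).natDegree)) jj := by
        refine Finset.sum_congr rfl fun jj _ => ?_
        rcases eq_or_ne jj k' with rfl | hne
        · simp
        · simp [Function.update_of_ne hne]
      have h2 : ∑ jj : Fin (n+1), ((Function.update f k' (p (Fin.last (n+1)))) jj).natDegree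
          + (f k').natDegree = ∑ jj : Fin (n+1), (f jj).natDegree
          + (p (Fin.last (n+1))).natDegree := by
        rw [h2a, Finset.sum_update_of_mem (Finset.mem_univ k'),
          Finset.sum_eq_sum_sdiff_singleton_add (Finset.mem_univ k')
            (fun jj => (f jj).natDegree)]
        ring
      have h3 : (p k'.castSucc).natDegree = (f k').natDegree := rfl
      omega
  have hkey := key j
  rw [mul_comm (n+1) n] at hkey
  have heven : 2 * (n * (n+1) / 2) = n * (n+1) := by
    have h2 : 2 ∣ n * (n+1) := (Nat.even_mul_succ_self n).two_dvd
    omega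
  have hcast1 : ((n * (n+1) : ℕ) : ℤ) = (n : ℤ) * ((n : ℤ) + 1) := by push_cast; ring
  have hcast2 : ((n * N : ℕ) : ℤ) = (n : ℤ) * (N : ℤ) := by push_cast; ring
  omega
end

section
/- If f₀, …, fₙ are functions analytic on an open set, f_{n+1} = f₀ + ⋯ + fₙ, and z₀ is a point where some fⱼ (0 ≤ j ≤ n+1) vanishes to order k > n, then the Wronskian W(f₀, …, fₙ) vanishes to order at least k − n at z₀. -/
open Matrix Filter Function Topology FormalMultilinearSeries

private lemma iteratedDeriv_eq_factorial_smul {f : ℂ → ℂ} {p : FormalMultilinearSeries ℂ ℂ ℂ}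
    {z₀ : ℂ} (hp : HasFPowerSeriesAt f p z₀) (l : ℕ) :
    iteratedDeriv l f z₀ = l.factorial • p.coeff l := by
  obtain ⟨r, hr⟩ := hp
  rw [iteratedDeriv_eq_iteratedFDeriv, ← hr.factorial_smul (1 : ℂ) l]
  rfl

private lemma vanish_factor {f : ℂ → ℂ} {z₀ : ℂ} (m : ℕ) (hf : AnalyticAt ℂ f z₀)
    (hv : ∀ l < m, iteratedDeriv l f z₀ = 0) :
    ∃ h : ℂ → ℂ, AnalyticAt ℂ h z₀ ∧ ∀ᶠ z in 𝓝 z₀, f z = (z - z₀) ^ m * h z := by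
  obtain ⟨p, hp⟩ := hf
  have hc : ∀ l < m, p.coeff l = 0 := by
    intro l hl
    have h1 := iteratedDeriv_eq_factorial_smul hp l
    rw [hv l hl] at h1
    have h2 : (l.factorial : ℂ) ≠ 0 := Nat.cast_ne_zero.2 (Nat.factorial_ne_zero l)
    simpa [eq_comm, nsmul_eq_mul, h2] using h1
  refine ⟨(swap dslope z₀)^[m] f,
    ⟨_, HasFPowerSeriesAt.has_fpower_series_iterate_dslope_fslope m hp⟩, ?_⟩
  have hq := hasFPowerSeriesAt_iff'.mp
    (HasFPowerSeriesAt.has_fpower_series_iterate_dslope_fslope m hp)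
  filter_upwards [hq, hasFPowerSeriesAt_iff'.mp hp] with x hx1 hx2
  obtain ⟨s, hs1, hs2⟩ := hx2.exists_hasSum_smul_of_apply_eq_zero hc
  rw [← hs1, smul_eq_mul]
  congr 1
  simp only [coeff_iterate_fslope] at hx1
  exact (hx1.unique hs2).symm

private lemma factor_vanish {z₀ : ℂ} :
    ∀ l m : ℕ, l < m → ∀ F H : ℂ → ℂ, AnalyticAt ℂ H z₀ →
      (F =ᶠ[𝓝 z₀] fun z => (z - z₀) ^ m * H z) → iteratedDeriv l F z₀ = 0 := by
  intro l
  induction l with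
  | zero =>
    intro m hm F H _ heq
    have h0 := heq.eq_of_nhds
    rw [iteratedDeriv_zero, h0, sub_self, zero_pow (by omega : m ≠ 0), zero_mul]
  | succ l ih =>
    intro m hm F H hH heq
    obtain ⟨m, rfl⟩ : ∃ m', m = m' + 1 := ⟨m - 1, by omega⟩
    rw [iteratedDeriv_succ']
    refine ih m (by omega) (deriv F)
      (fun z => ((m : ℂ) + 1) * H z + (z - z₀) * deriv H z) ?_ ?_
    · have hs : AnalyticOnNhd ℂ H {z | AnalyticAt ℂ H z} := fun z hz => hz
      have hd : AnalyticAt ℂ (deriv H) z₀ := hs.deriv z₀ hH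
      exact (analyticAt_const.mul hH).add
        (((analyticAt_id.sub analyticAt_const)).mul hd)
    · have h1 : deriv F =ᶠ[𝓝 z₀] deriv (fun z => (z - z₀) ^ (m + 1) * H z) := heq.deriv
      filter_upwards [h1, hH.eventually_analyticAt] with z hz hHz
      rw [hz]
      have hd1 : HasDerivAt (fun w => (w - z₀) ^ (m + 1))
          (((m : ℂ) + 1) * (z - z₀) ^ m) z := by
        have := ((hasDerivAt_id z).sub_const z₀).pow (m + 1)
        simp at this; exact this
      have hd2 : HasDerivAt H (deriv H z) z := hHz.differentiableAt.hasDerivAt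
      rw [(hd1.fun_mul hd2).deriv]
      ring

private lemma analyticOnNhd_iteratedDeriv {g : ℂ → ℂ} {U : Set ℂ}
    (hg : AnalyticOnNhd ℂ g U) : ∀ i : ℕ, AnalyticOnNhd ℂ (iteratedDeriv i g) U := by
  intro i
  induction i with
  | zero => simpa [iteratedDeriv_zero] using hg
  | succ i ih => rw [iteratedDeriv_succ]; exact ih.deriv

private lemma iteratedDeriv_fin_sum {n : ℕ} {U : Set ℂ} (hU : IsOpen U)
    (g : Fin n → ℂ → ℂ) (hg : ∀ j, AnalyticOnNhd ℂ (g j) U) :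
    ∀ (i : ℕ) (z : ℂ), z ∈ U →
      iteratedDeriv i (∑ j, g j) z = ∑ j, iteratedDeriv i (g j) z := by
  intro i
  induction i with
  | zero => intro z hz; simp
  | succ i ih =>
    intro z hz
    rw [iteratedDeriv_succ]
    have hev : iteratedDeriv i (∑ j, g j) =ᶠ[𝓝 z]
        fun w => ∑ j, iteratedDeriv i (g j) w := by
      filter_upwards [hU.mem_nhds hz] with w hw using ih w hw
    rw [hev.deriv_eq, deriv_fun_sum fun j _ =>
      ((analyticOnNhd_iteratedDeriv (hg j) i) z hz).differentiableAt]
    simp [iteratedDeriv_succ]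

private lemma analyticAt_det {m : ℕ} {z₀ : ℂ} (A : ℂ → Matrix (Fin m) (Fin m) ℂ)
    (h : ∀ i j, AnalyticAt ℂ (fun z => A z i j) z₀) :
    AnalyticAt ℂ (fun z => (A z).det) z₀ := by
  simp only [Matrix.det_apply]
  apply Finset.analyticAt_fun_sum
  intro σ _
  have he : (fun z => Equiv.Perm.sign σ • ∏ i, A z (σ i) i)
      = fun z => ((Equiv.Perm.sign σ : ℤ) : ℂ) * ∏ i, A z (σ i) i := by
    funext z; rw [Units.smul_def, zsmul_eq_mul]
  rw [he]
  exact analyticAt_const.mul (Finset.analyticAt_fun_prod _ fun i _ => h (σ i) i)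

/-- If one of f₀,…,f_{n+1} (with f_{n+1} = f₀+⋯+fₙ) vanishes to order k > n at z₀,
then the Wronskian W(f₀,…,fₙ) vanishes to order at least k - n at z₀. -/
theorem wronskian_vanishing_order (n : ℕ) (U : Set ℂ) (hU : IsOpen U)
    (f : Fin (n + 2) → ℂ → ℂ)
    (hf : ∀ j : Fin (n + 1), AnalyticOnNhd ℂ (f j.castSucc) U)
    (hsum : f (Fin.last (n + 1)) = ∑ j : Fin (n + 1), f j.castSucc)
    (z₀ : ℂ) (hz₀ : z₀ ∈ U)
    (j : Fin (n + 2)) (k : ℕ) (hk : n < k)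
    (hvan : ∀ l < k, iteratedDeriv l (f j) z₀ = 0) :
    ∀ l < k - n,
      iteratedDeriv l
        (fun z => (Matrix.of fun i j' : Fin (n + 1) =>
          iteratedDeriv i (f j'.castSucc) z).det) z₀ = 0 := by
  intro l hl
  set m := k - n with hm
  set M : ℂ → Matrix (Fin (n + 1)) (Fin (n + 1)) ℂ :=
    fun z => Matrix.of fun i j' : Fin (n + 1) =>
      iteratedDeriv i (f j'.castSucc) z with hMdef
  have hfj : AnalyticOnNhd ℂ (f j) U := by
    rcases Fin.eq_castSucc_or_eq_last j with ⟨j₀, rfl⟩ | rfl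
    · exact hf j₀
    · rw [hsum, show (∑ j : Fin (n+1), f j.castSucc) = fun z => ∑ j : Fin (n+1), f j.castSucc z
        from funext fun z => by simp]
      exact Finset.analyticOnNhd_fun_sum _ fun j' _ => hf j'
  obtain ⟨c, hcol⟩ : ∃ c : Fin (n + 1), ∀ z ∈ U,
      (M z).det = ((M z).updateCol c fun i => iteratedDeriv (i : ℕ) (f j) z).det := by
    rcases Fin.eq_castSucc_or_eq_last j with ⟨j₀, rfl⟩ | rfl
    · refine ⟨j₀, fun z hz => ?_⟩
      rw [show (fun i : Fin (n+1) => iteratedDeriv (i : ℕ) (f j₀.castSucc) z)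
          = fun i => M z i j₀ from rfl, Matrix.updateCol_eq_self]
    · refine ⟨0, fun z hz => ?_⟩
      have hcol' : (fun i : Fin (n + 1) => iteratedDeriv (i : ℕ) (f (Fin.last (n + 1))) z)
          = fun i => ∑ j', (fun _ : Fin (n+1) => (1 : ℂ)) j' • M z i j' := by
        funext i
        rw [hsum]
        simpa [hMdef] using iteratedDeriv_fin_sum hU _ (fun j' => hf j') i z hz
      rw [hcol', Matrix.det_updateCol_sum]
      simp
  have hentry : ∀ i : Fin (n + 1), ∃ h : ℂ → ℂ, AnalyticAt ℂ h z₀ ∧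
      ∀ᶠ z in 𝓝 z₀, iteratedDeriv (i : ℕ) (f j) z = (z - z₀) ^ m * h z := by
    intro i
    apply vanish_factor m ((analyticOnNhd_iteratedDeriv hfj i) z₀ hz₀)
    intro l' hl'
    simp only [iteratedDeriv_eq_iterate]
    rw [← Function.iterate_add_apply, ← iteratedDeriv_eq_iterate]
    have hi : (i : ℕ) ≤ n := i.is_le
    exact hvan _ (by omega)
  choose h hA hE using hentry
  have hW : (fun z => (M z).det) =ᶠ[𝓝 z₀]
      fun z => (z - z₀) ^ m * ((M z).updateCol c fun i => h i z).det := by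
    have hAll : ∀ᶠ z in 𝓝 z₀, ∀ i : Fin (n + 1), iteratedDeriv (i : ℕ) (f j) z = (z - z₀) ^ m * h i z :=
      Filter.eventually_all.mpr hE
    filter_upwards [hU.mem_nhds hz₀, hAll] with z hz hcols
    rw [hcol z hz]
    have hcc : (fun i : Fin (n + 1) => iteratedDeriv (i : ℕ) (f j) z)
        = (z - z₀) ^ m • fun i => h i z := by
      funext i; simpa using hcols i
    rw [hcc, Matrix.det_updateCol_smul]
  have hD : AnalyticAt ℂ (fun z => ((M z).updateCol c fun i => h i z).det) z₀ := by
    apply analyticAt_det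
    intro i j'
    by_cases hjc : j' = c
    · have : (fun z => ((M z).updateCol c fun i' => h i' z) i j') = fun z => h i z := by
        funext z; rw [Matrix.updateCol_apply, if_pos hjc]
      rw [this]; exact hA i
    · have : (fun z => ((M z).updateCol c fun i' => h i' z) i j')
          = fun z => iteratedDeriv (i : ℕ) (f j'.castSucc) z := by
        funext z; rw [Matrix.updateCol_ne hjc]; rfl
      rw [this]
      exact (analyticOnNhd_iteratedDeriv (hf j') i) z₀ hz₀
  exact factor_vanish l m hl _ _ hD hW
end

section
/- Let f₀,…,fₙ be analytic on a domain Ω, f_{n+1} = f₀ + ⋯ + fₙ, and let 𝐁 and ℬ be respectively the LCM of the Blaschke products B₀,…,B_{n+1} of the fⱼ and the radical of B₀⋯B_{n+1} (zeros in Ω assumed finite in number). If W = W(f₀,…,fₙ) is not identically zero, then W·ℬⁿ/𝐁 is analytic on Ω (i.e., 𝐁 divides W·ℬⁿ). -/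
open Matrix Finset

open Filter Topology


/-- `h` equals `(z - z₀)^m` times an analytic function, near `z₀`. -/
def Fac (z₀ : ℂ) (m : ℕ) (h : ℂ → ℂ) : Prop :=
  ∃ u : ℂ → ℂ, AnalyticAt ℂ u z₀ ∧ ∀ᶠ z in 𝓝 z₀, h z = (z - z₀) ^ m * u z

lemma Fac.of_analyticAt {z₀ : ℂ} {h : ℂ → ℂ} (hh : AnalyticAt ℂ h z₀) : Fac z₀ 0 h :=
  ⟨h, hh, by filter_upwards with z; simp⟩

lemma Fac.analyticAt {z₀ : ℂ} {h : ℂ → ℂ} (hh : Fac z₀ 0 h) : AnalyticAt ℂ h z₀ := by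
  obtain ⟨u, hu, hev⟩ := hh
  exact hu.congr (by filter_upwards [hev] with z hz; simp [hz])

lemma Fac.congr {z₀ : ℂ} {m : ℕ} {h h' : ℂ → ℂ} (hh : Fac z₀ m h)
    (he : h' =ᶠ[𝓝 z₀] h) : Fac z₀ m h' := by
  obtain ⟨u, hu, hev⟩ := hh
  exact ⟨u, hu, by filter_upwards [he, hev] with z h1 h2; rw [h1, h2]⟩

lemma Fac.mono {z₀ : ℂ} {m m' : ℕ} {h : ℂ → ℂ} (hh : Fac z₀ m h) (hle : m' ≤ m) :
    Fac z₀ m' h := by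
  obtain ⟨u, hu, hev⟩ := hh
  refine ⟨fun z => (z - z₀) ^ (m - m') * u z,
    ((analyticAt_id.sub analyticAt_const).pow _).mul hu, ?_⟩
  filter_upwards [hev] with z hz
  rw [hz, ← mul_assoc, ← pow_add, Nat.add_sub_cancel' hle]

lemma Fac.mul {z₀ : ℂ} {m₁ m₂ : ℕ} {h₁ h₂ : ℂ → ℂ} (hf₁ : Fac z₀ m₁ h₁)
    (hf₂ : Fac z₀ m₂ h₂) : Fac z₀ (m₁ + m₂) (fun z => h₁ z * h₂ z) := by
  obtain ⟨u₁, hu₁, he₁⟩ := hf₁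
  obtain ⟨u₂, hu₂, he₂⟩ := hf₂
  refine ⟨fun z => u₁ z * u₂ z, hu₁.mul hu₂, ?_⟩
  filter_upwards [he₁, he₂] with z h1 h2
  rw [h1, h2, pow_add]; ring

lemma Fac.const_mul {z₀ : ℂ} {m : ℕ} {h : ℂ → ℂ} (hh : Fac z₀ m h) (c : ℂ) :
    Fac z₀ m (fun z => c * h z) := by
  obtain ⟨u, hu, hev⟩ := hh
  refine ⟨fun z => c * u z, analyticAt_const.mul hu, ?_⟩
  filter_upwards [hev] with z hz; rw [hz]; ring

lemma Fac.add {z₀ : ℂ} {m : ℕ} {h₁ h₂ : ℂ → ℂ} (hf₁ : Fac z₀ m h₁) (hf₂ : Fac z₀ m h₂) :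
    Fac z₀ m (fun z => h₁ z + h₂ z) := by
  obtain ⟨u₁, hu₁, he₁⟩ := hf₁
  obtain ⟨u₂, hu₂, he₂⟩ := hf₂
  refine ⟨fun z => u₁ z + u₂ z, hu₁.add hu₂, ?_⟩
  filter_upwards [he₁, he₂] with z h1 h2
  rw [h1, h2]; ring

lemma Fac.sum {ι : Type*} {z₀ : ℂ} {m : ℕ} (s : Finset ι) (h : ι → ℂ → ℂ)
    (hs : ∀ i ∈ s, Fac z₀ m (h i)) : Fac z₀ m (fun z => ∑ i ∈ s, h i z) := by
  classical
  induction s using Finset.induction_on with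
  | empty =>
    refine ⟨0, analyticAt_const, ?_⟩
    filter_upwards with z; simp
  | @insert a s hns ih =>
    have := (hs a (Finset.mem_insert_self a s)).add
      (ih fun i hi => hs i (Finset.mem_insert_of_mem hi))
    exact this.congr (by filter_upwards with z; simp [Finset.sum_insert hns])

lemma Fac.pow {z₀ : ℂ} {m : ℕ} {h : ℂ → ℂ} (hh : Fac z₀ m h) (p : ℕ) :
    Fac z₀ (p * m) (fun z => h z ^ p) := by
  induction p with
  | zero => exact ⟨1, analyticAt_const, by filter_upwards with z; simp⟩
  | succ p ih =>
    have := ih.mul hh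
    refine this.congr (by filter_upwards with z; rw [pow_succ]) |>.mono (by ring_nf; omega)

lemma AnalyticAt.deriv'' {h : ℂ → ℂ} {z₀ : ℂ} (hh : AnalyticAt ℂ h z₀) :
    AnalyticAt ℂ (deriv h) z₀ := by
  have : AnalyticOnNhd ℂ h {z | AnalyticAt ℂ h z} := fun z hz => hz
  exact this.deriv z₀ hh

lemma AnalyticAt.iteratedDeriv'' {h : ℂ → ℂ} {z₀ : ℂ} (hh : AnalyticAt ℂ h z₀) (i : ℕ) :
    AnalyticAt ℂ (iteratedDeriv i h) z₀ := by
  induction i with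
  | zero => simpa using hh
  | succ i ih => rw [iteratedDeriv_succ]; exact ih.deriv''

lemma Fac.deriv {z₀ : ℂ} {m : ℕ} {h : ℂ → ℂ} (hh : Fac z₀ m h) :
    Fac z₀ (m - 1) (_root_.deriv h) := by
  obtain ⟨u, hu, hev⟩ := hh
  cases m with
  | zero =>
    refine ⟨_root_.deriv u, hu.deriv'', ?_⟩
    have : _root_.deriv h =ᶠ[𝓝 z₀] _root_.deriv u :=
      Filter.EventuallyEq.deriv (by filter_upwards [hev] with z hz; simpa using hz)
    filter_upwards [this] with z hz; simpa using hz
  | succ m =>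
    refine ⟨fun z => ((m : ℂ) + 1) * u z + (z - z₀) * _root_.deriv u z,
      (analyticAt_const.mul hu).add ((analyticAt_id.sub analyticAt_const).mul hu.deriv''), ?_⟩
    have h1 : _root_.deriv h =ᶠ[𝓝 z₀] _root_.deriv (fun z => (z - z₀) ^ (m + 1) * u z) :=
      Filter.EventuallyEq.deriv hev
    filter_upwards [h1, hu.eventually_analyticAt] with z hz hz2
    have hd : HasDerivAt (fun w => (w - z₀) ^ (m + 1) * u w)
        ((((m : ℂ) + 1) * (z - z₀) ^ (m + 1 - 1) * 1) * u z
          + (z - z₀) ^ (m + 1) * _root_.deriv u z) z := by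
      have hpow := ((hasDerivAt_id z).sub_const z₀).pow (m + 1)
      simp only [id] at hpow
      have hpow' : HasDerivAt (fun w : ℂ => (w - z₀) ^ (m + 1))
          (((m : ℂ) + 1) * (z - z₀) ^ (m + 1 - 1) * 1) z := by
        convert (show HasDerivAt (fun w : ℂ => (w - z₀) ^ (m + 1)) _ z from hpow) using 1
        push_cast
        ring
      exact hpow'.mul hz2.differentiableAt.hasDerivAt
    rw [hz, hd.deriv]
    simp only [Nat.add_sub_cancel, Nat.succ_sub_one]
    ring

lemma Fac.iteratedDeriv {z₀ : ℂ} {m : ℕ} {h : ℂ → ℂ} (hh : Fac z₀ m h) (i : ℕ) :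
    Fac z₀ (m - i) (iteratedDeriv i h) := by
  induction i with
  | zero => simpa using hh
  | succ i ih =>
    rw [iteratedDeriv_succ]
    simpa [Nat.sub_sub] using ih.deriv

lemma fac_det (n : ℕ) (z₀ : ℂ) (g : Fin (n + 1) → ℂ → ℂ)
    (hg : ∀ j, AnalyticAt ℂ (g j) z₀) (j₀ : Fin (n + 1)) (k : ℕ) (hk : Fac z₀ k (g j₀)) :
    Fac z₀ (k - n)
      (fun z => (Matrix.of fun i j : Fin (n + 1) => iteratedDeriv (i : ℕ) (g j) z).det) := by
  classical
  have hdet : ∀ z : ℂ,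
      (Matrix.of fun i j : Fin (n + 1) => iteratedDeriv (i : ℕ) (g j) z).det
        = ∑ σ : Equiv.Perm (Fin (n + 1)), ((Equiv.Perm.sign σ : ℤ) : ℂ) *
            ∏ i : Fin (n + 1), iteratedDeriv ((σ i : Fin (n + 1)) : ℕ) (g i) z := by
    intro z
    rw [Matrix.det_apply]
    refine Finset.sum_congr rfl fun σ _ => ?_
    rw [Units.smul_def, zsmul_eq_mul]
    rfl
  refine Fac.congr ?_ (Filter.EventuallyEq.of_eq (funext hdet))
  refine Fac.sum _ _ fun σ _ => ?_
  refine Fac.const_mul ?_ _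
  have hprod : (fun z => ∏ i : Fin (n + 1), iteratedDeriv ((σ i : Fin (n + 1)) : ℕ) (g i) z)
      = fun z => iteratedDeriv ((σ j₀ : Fin (n + 1)) : ℕ) (g j₀) z *
          ∏ i ∈ Finset.univ.erase j₀, iteratedDeriv ((σ i : Fin (n + 1)) : ℕ) (g i) z := by
    funext z
    exact (Finset.mul_prod_erase Finset.univ _ (Finset.mem_univ j₀)).symm
  rw [hprod]
  have h1 : Fac z₀ (k - n) (iteratedDeriv ((σ j₀ : Fin (n + 1)) : ℕ) (g j₀)) :=
    (hk.iteratedDeriv _).mono (Nat.sub_le_sub_left (Fin.is_le _) k)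
  have h2 : Fac z₀ 0 (fun z => ∏ i ∈ Finset.univ.erase j₀,
      iteratedDeriv ((σ i : Fin (n + 1)) : ℕ) (g i) z) := by
    refine Fac.of_analyticAt ?_
    exact Finset.analyticAt_fun_prod (𝕜 := ℂ) _ fun i _ => (hg i).iteratedDeriv'' _
  simpa using h1.mul h2

lemma iteratedDeriv_sum_apply {m : ℕ} {Ω : Set ℂ} (hΩ : IsOpen Ω)
    (g : Fin m → ℂ → ℂ) (hg : ∀ j, AnalyticOnNhd ℂ (g j) Ω) (i : ℕ) :
    ∀ z ∈ Ω, iteratedDeriv i (∑ j, g j) z = ∑ j, iteratedDeriv i (g j) z := by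
  induction i with
  | zero => intro z hz; simp
  | succ i ih =>
    intro z hz
    rw [iteratedDeriv_succ]
    have h1 : _root_.deriv (iteratedDeriv i (∑ j, g j)) z
        = _root_.deriv (fun w => ∑ j, iteratedDeriv i (g j) w) z := by
      apply Filter.EventuallyEq.deriv_eq
      filter_upwards [hΩ.mem_nhds hz] with w hw
      exact ih w hw
    rw [h1, deriv_fun_sum fun j _ => ((hg j z hz).iteratedDeriv'' i).differentiableAt]
    refine Finset.sum_congr rfl fun j _ => ?_
    rw [iteratedDeriv_succ]

/-- 𝐁 divides W·ℬⁿ: if 𝐁 is an analytic function whose order of vanishing at each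
point of Ω is the max of the orders of the fⱼ, and ℬ vanishes to order exactly one at
each common zero, then W·ℬⁿ/𝐁 is analytic on Ω. -/
theorem lcm_divides_wronskian_rad_pow (n : ℕ) (Ω : Set ℂ) (hΩopen : IsOpen Ω)
    (hΩconn : IsConnected Ω)
    (f : Fin (n + 2) → ℂ → ℂ) (hf : ∀ j, AnalyticOnNhd ℂ (f j) Ω)
    (hsum : f (Fin.last (n + 1)) = ∑ j : Fin (n + 1), f j.castSucc)
    (hfin : {z ∈ Ω | ∃ j, f j z = 0}.Finite)
    (W : ℂ → ℂ)
    (hW : W = fun z => (Matrix.of fun i j : Fin (n + 1) =>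
      iteratedDeriv (i : ℕ) (f j.castSucc) z).det)
    (hWnz : ∃ z ∈ Ω, W z ≠ 0)
    (BB calB : ℂ → ℂ) (hBB : AnalyticOnNhd ℂ BB Ω) (hcalB : AnalyticOnNhd ℂ calB Ω)
    (hBBord : ∀ z (hz : z ∈ Ω),
      analyticOrderAt BB z = Finset.univ.sup fun j => analyticOrderAt (f j) z)
    (hcalBord : ∀ z (hz : z ∈ Ω),
      analyticOrderAt calB z = min 1 (∑ j, analyticOrderAt (f j) z)) :
    ∃ F : ℂ → ℂ, AnalyticOnNhd ℂ F Ω ∧ ∀ z ∈ Ω, W z * calB z ^ n = F z * BB z := by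
  classical
  have hord_ne_top : ∀ (j : Fin (n + 2)) (z₀ : ℂ) (hz : z₀ ∈ Ω), analyticOrderAt (f j) z₀ ≠ ⊤ := by
    intro j z₀ hz htop
    rw [analyticOrderAt_eq_top] at htop
    have hmem : ∀ᶠ z in 𝓝 z₀, f j z = 0 ∧ z ∈ Ω := htop.and (hΩopen.eventually_mem hz)
    have hsub : {z : ℂ | f j z = 0 ∧ z ∈ Ω} ⊆ {z ∈ Ω | ∃ j, f j z = 0} :=
      fun z hz' => ⟨hz'.2, j, hz'.1⟩
    exact ((infinite_of_mem_nhds z₀ hmem).mono hsub) hfin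
  have hWan : ∀ z₀ ∈ Ω, AnalyticAt ℂ W z₀ := by
    intro z₀ hz
    have h := fac_det n z₀ (fun j => f j.castSucc) (fun j => hf _ z₀ hz) 0 0
      (Fac.of_analyticAt (hf _ z₀ hz))
    have h' : Fac z₀ 0 W := by rw [hW]; simpa using h
    exact h'.analyticAt
  have key : ∀ z₀ ∈ Ω, ∃ q : ℂ → ℂ, AnalyticAt ℂ q z₀ ∧
      ∀ᶠ z in 𝓝 z₀, W z * calB z ^ n = q z * BB z ∧ (z ≠ z₀ → BB z ≠ 0) := by
    intro z₀ hz
    obtain ⟨j₀, -, hj₀⟩ := Finset.exists_mem_eq_sup Finset.univ univ_nonempty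
      (fun j => analyticOrderAt (f j) z₀)
    obtain ⟨k, hk⟩ := WithTop.ne_top_iff_exists.mp (hord_ne_top j₀ z₀ hz)
    have hBBk : analyticOrderAt BB z₀ = (k : ℕ∞) := by
      rw [hBBord z₀ hz, hj₀, ← hk]
      rfl
    obtain ⟨v, hv, hv0, hBBev⟩ := ((hBB z₀ hz).analyticOrderAt_eq_natCast (n := k)).mp hBBk
    have hfacj₀ : Fac z₀ k (f j₀) := by
      obtain ⟨g0, hg0, hg00, hev⟩ := ((hf j₀ z₀ hz).analyticOrderAt_eq_natCast (n := k)).mp hk.symm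
      exact ⟨g0, hg0, by filter_upwards [hev] with z h; simpa [smul_eq_mul] using h⟩
    have hWfac : Fac z₀ (k - n) W := by
      rcases Fin.eq_castSucc_or_eq_last j₀ with ⟨j', rfl⟩ | rfl
      · have := fac_det n z₀ (fun j => f j.castSucc) (fun j => hf _ z₀ hz) j' k hfacj₀
        rw [hW]; simpa using this
      · set g : Fin (n + 1) → ℂ → ℂ :=
          Function.update (fun j : Fin (n + 1) => f j.castSucc) 0 (f (Fin.last (n + 1)))
          with hgdef
        have hgan : ∀ j, AnalyticAt ℂ (g j) z₀ := by
          intro j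
          rcases eq_or_ne j 0 with rfl | hj
          · simpa [hgdef] using hf (Fin.last (n + 1)) z₀ hz
          · simpa [hgdef, Function.update_of_ne hj] using hf j.castSucc z₀ hz
        have hg0 : Fac z₀ k (g 0) := by simpa [hgdef] using hfacj₀
        refine (fac_det n z₀ g hgan 0 k hg0).congr ?_
        filter_upwards [hΩopen.eventually_mem hz] with z hzΩ
        have hcol : ∀ i : Fin (n + 1), iteratedDeriv (i : ℕ) (f (Fin.last (n + 1))) z
            = ∑ j : Fin (n + 1), iteratedDeriv (i : ℕ) (f j.castSucc) z := by
          intro i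
          rw [hsum]
          exact iteratedDeriv_sum_apply hΩopen _ (fun j => hf j.castSucc) i z hzΩ
        have hmat : (Matrix.of fun i j : Fin (n + 1) => iteratedDeriv (i : ℕ) (g j) z)
            = (Matrix.of fun i j : Fin (n + 1) =>
                iteratedDeriv (i : ℕ) (f j.castSucc) z).updateCol 0
              (fun i => ∑ j : Fin (n + 1), (1 : ℂ) •
                (Matrix.of fun i j : Fin (n + 1) =>
                  iteratedDeriv (i : ℕ) (f j.castSucc) z) i j) := by
          ext i j
          rcases eq_or_ne j 0 with rfl | hj
          · simp [hgdef, Matrix.updateCol_apply, hcol i]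
          · simp [hgdef, Matrix.updateCol_apply, hj, Function.update_of_ne hj]
        simp only [hW]
        rw [hmat, Matrix.det_updateCol_sum]
        simp
    have hcalBfac : Fac z₀ (min 1 k) calB := by
      have hord : analyticOrderAt calB z₀ = ((min 1 k : ℕ) : ℕ∞) := by
        rw [hcalBord z₀ hz]
        rcases Nat.eq_zero_or_pos k with rfl | hkpos
        · have hall : ∀ j : Fin (n + 2), analyticOrderAt (f j) z₀ = 0 := by
            intro j
            have hle : analyticOrderAt (f j) z₀ ≤ analyticOrderAt (f j₀) z₀ := by
              rw [← hj₀]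
              exact Finset.le_sup (f := fun j => analyticOrderAt (f j) z₀) (Finset.mem_univ j)
            rw [← hk] at hle
            exact nonpos_iff_eq_zero.mp (by exact_mod_cast hle)
          rw [Finset.sum_eq_zero fun j _ => hall j]
          simp
        · have h1 : (1 : ℕ∞) ≤ ∑ j, analyticOrderAt (f j) z₀ := by
            have h2 := Finset.single_le_sum (f := fun j => analyticOrderAt (f j) z₀)
              (fun _ _ => zero_le) (Finset.mem_univ j₀)
            beta_reduce at h2
            rw [← hk] at h2
            exact le_trans (by rw [show (1:ℕ∞) = ((1:ℕ):ℕ∞) from rfl]; exact Nat.cast_le.mpr hkpos) h2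
          have hminn : min 1 k = 1 := by omega
          rw [min_eq_left h1, hminn]
          simp
      obtain ⟨w, hw, hw0, hev⟩ := ((hcalB z₀ hz).analyticOrderAt_eq_natCast).mp hord
      exact ⟨w, hw, by filter_upwards [hev] with z h; simpa [smul_eq_mul] using h⟩
    have hG : Fac z₀ k (fun z => W z * calB z ^ n) := by
      refine (hWfac.mul (hcalBfac.pow n)).mono ?_
      rcases Nat.eq_zero_or_pos k with rfl | hkpos
      · simp
      · have hminn : min 1 k = 1 := by omega
        rw [hminn]; omega
    obtain ⟨u, hu, hGev⟩ := hG
    refine ⟨fun z => u z / v z, hu.div hv hv0, ?_⟩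
    have hvne : ∀ᶠ z in 𝓝 z₀, v z ≠ 0 := hv.continuousAt.eventually_ne hv0
    filter_upwards [hGev, hBBev, hvne] with z h1 h2 h3
    have h2' : BB z = (z - z₀) ^ k * v z := by simpa [smul_eq_mul] using h2
    refine ⟨?_, fun hne => ?_⟩
    · rw [h1, h2']
      field_simp
    · rw [h2']
      exact mul_ne_zero (pow_ne_zero _ (sub_ne_zero.mpr hne)) h3
  choose q hqan hqev using key
  set F : ℂ → ℂ := fun z => if BB z = 0 then
      limUnder (𝓝[≠] z) (fun w => W w * calB w ^ n / BB w)
    else W z * calB z ^ n / BB z with hF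
  have hFval : ∀ z, F z = if BB z = 0 then
      limUnder (𝓝[≠] z) (fun w => W w * calB w ^ n / BB w)
    else W z * calB z ^ n / BB z := fun z => rfl
  refine ⟨F, ?_, ?_⟩
  · intro z₀ hz
    by_cases h0 : BB z₀ = 0
    · have hq := hqan z₀ hz
      have hev := hqev z₀ hz
      have hlim : limUnder (𝓝[≠] z₀) (fun w => W w * calB w ^ n / BB w) = q z₀ hz z₀ := by
        apply Filter.Tendsto.limUnder_eq
        refine Filter.Tendsto.congr' ?_ (hq.continuousAt.continuousWithinAt)
        filter_upwards [eventually_nhdsWithin_of_eventually_nhds hev,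
          eventually_mem_nhdsWithin] with w hw hwne
        have hBBw : BB w ≠ 0 := hw.2 hwne
        rw [eq_comm, div_eq_iff hBBw]
        exact hw.1
      have hFq : F =ᶠ[𝓝 z₀] q z₀ hz := by
        filter_upwards [hev] with z hz'
        rw [hFval]
        by_cases hzz : z = z₀
        · subst hzz
          rw [if_pos h0, hlim]
        · have hBBz : BB z ≠ 0 := hz'.2 hzz
          rw [if_neg hBBz, hz'.1, mul_div_cancel_right₀ _ hBBz]
      exact hq.congr hFq.symm
    · have han : AnalyticAt ℂ (fun z => W z * calB z ^ n / BB z) z₀ :=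
        ((hWan z₀ hz).mul ((hcalB z₀ hz).pow n)).div (hBB z₀ hz) h0
      refine han.congr ?_
      filter_upwards [(hBB z₀ hz).continuousAt.eventually_ne h0] with z hz'
      rw [hFval, if_neg hz']
  · intro z hz
    by_cases h0 : BB z = 0
    · rw [hFval, if_pos h0, h0, mul_zero]
      have := (hqev z hz).self_of_nhds
      rw [this.1, h0, mul_zero]
    · rw [hFval, if_neg h0, div_mul_cancel₀ _ h0]
end
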